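/- Let $(A,\circ_A)$ be a Zinbiel algebra and $P:A\to A$ a Rota-Baxter operator of weight $\lambda$, i.e., $P(x)\circ_A P(y) = P(P(x)\circ_A y + x\circ_A P(y) + \lambda\, x\circ_A y)$. Then the operation $x\cdot_P y := P(x)\circ_A y + x\circ_A P(y) + \lambda\, x\circ_A y$ defines a Zinbiel algebra structure on $A$, and $P:(A,\cdot_P)\to(A,\circ_A)$ is a Zinbiel algebra homomorphism. -/

import Mathlib

/-- The descendent product `x ·_P y := P(x) ∘ y + x ∘ P(y) + λ x ∘ y`. -/
def rbDescendent {K : Type*} [Field K] {A : Type*} [AddCommGroup A] [Module K A]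
    (mul : A →ₗ[K] A →ₗ[K] A) (P : A →ₗ[K] A) (l : K) (x y : A) : A :=
  mul (P x) y + mul x (P y) + l • mul x y

/-!
The Rota-Baxter identity says exactly that `P (x ·_P y) = P x ∘ P y`. Hence in `x ·_P (y ·_P z)`
the inner product is either kept or turned by `P` into `P y ∘ P z`, so all seven terms of the
expansion have the form `a ∘ (b ∘ c)`. The Zinbiel identity rewrites each as `(a ∘ b + b ∘ a) ∘ c`,
and the resulting sum is the expansion of `(x ·_P y + y ·_P x) ·_P z`, whose left factor is
symmetrised termwise and mapped by `P` to `P x ∘ P y + P y ∘ P x`.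
-/

def IsZinbiel {R A : Type*} [CommSemiring R] [AddCommMonoid A] [Module R A]
    (mul : A →ₗ[R] A →ₗ[R] A) : Prop :=
  ∀ x y z : A, mul x (mul y z) = mul (mul x y + mul y x) z

def IsRotaBaxter {R A : Type*} [CommSemiring R] [AddCommMonoid A] [Module R A]
    (mul : A →ₗ[R] A →ₗ[R] A) (P : A →ₗ[R] A) (l : R) : Prop :=
  ∀ x y : A, mul (P x) (P y) = P (mul (P x) y + mul x (P y) + l • mul x y)

section

variable {K A : Type*} [Field K] [AddCommGroup A] [Module K A]
  (mul : A →ₗ[K] A →ₗ[K] A) (P : A →ₗ[K] A) (l : K)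

theorem map_rbDescendent (hP : IsRotaBaxter mul P l) (x y : A) :
    P (rbDescendent mul P l x y) = mul (P x) (P y) :=
  (hP x y).symm

theorem map_rbDescendent_add_rbDescendent_swap (hP : IsRotaBaxter mul P l) (x y : A) :
    P (rbDescendent mul P l x y + rbDescendent mul P l y x)
      = mul (P x) (P y) + mul (P y) (P x) := by
  rw [map_add, map_rbDescendent mul P l hP, map_rbDescendent mul P l hP]

theorem rbDescendent_add_rbDescendent_swap (x y : A) :
    rbDescendent mul P l x y + rbDescendent mul P l y x
      = (mul (P x) y + mul y (P x)) + (mul x (P y) + mul (P y) x) + l • (mul x y + mul y x) := by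
  simp only [rbDescendent, smul_add]
  abel

theorem rbDescendent_rbDescendent_of_zinbiel (hZ : IsZinbiel mul) (hP : IsRotaBaxter mul P l)
    (x y z : A) :
    rbDescendent mul P l x (rbDescendent mul P l y z)
      = mul (mul (P x) (P y) + mul (P y) (P x)) z
        + mul ((mul (P x) y + mul y (P x)) + (mul x (P y) + mul (P y) x)) (P z)
        + l • mul ((mul (P x) y + mul y (P x)) + (mul x (P y) + mul (P y) x)) z
        + l • mul (mul x y + mul y x) (P z) + (l * l) • mul (mul x y + mul y x) z := by
  rw [rbDescendent, map_rbDescendent mul P l hP, rbDescendent]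
  simp only [map_add, map_smul, LinearMap.add_apply, hZ _ _ _]
  module

end

/-- If `P` is a Rota-Baxter operator of weight `λ` on a Zinbiel algebra `(A, ∘)`, then
`x ·_P y := P(x) ∘ y + x ∘ P(y) + λ x ∘ y` is a Zinbiel algebra structure on `A` and
`P : (A, ·_P) → (A, ∘)` is a Zinbiel algebra homomorphism. -/
theorem rota_baxter_descendent_zinbiel {K : Type*} [Field K] {A : Type*} [AddCommGroup A]
    [Module K A] (mul : A →ₗ[K] A →ₗ[K] A)
    (hZ : ∀ x y z : A, mul x (mul y z) = mul (mul x y + mul y x) z)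
    (P : A →ₗ[K] A) (l : K)
    (hP : ∀ x y : A, mul (P x) (P y) = P (mul (P x) y + mul x (P y) + l • mul x y)) :
    (∀ x y z : A,
      rbDescendent mul P l x (rbDescendent mul P l y z)
        = rbDescendent mul P l
            (rbDescendent mul P l x y + rbDescendent mul P l y x) z) ∧
    (∀ x y : A, P (rbDescendent mul P l x y) = mul (P x) (P y)) := by
  refine ⟨fun x y z => ?_, map_rbDescendent mul P l hP⟩
  rw [rbDescendent_rbDescendent_of_zinbiel mul P l hZ hP, rbDescendent.eq_1 mul P l (_ + _) z,
    map_rbDescendent_add_rbDescendent_swap mul P l hP, rbDescendent_add_rbDescendent_swap]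
  simp only [map_add, map_smul, LinearMap.add_apply, LinearMap.smul_apply]
  module
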